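/- arXiv:2002.11875 — 2 statements merged into one kernel-verified Lean document; each statement's English description precedes it below -/
import Mathlib

section
/- Let X ⊆ ℝ^n and Y ⊆ ℝ^m be nonempty and f : ℝ^n × ℝ^m → ℝ. A pair (x*,y*) ∈ X × Y is a local minimax point of f if and only if there exist δ₀ > 0 and a function h : (0,δ₀] → [0,∞) with h(δ) → 0 as δ → 0⁺, such that for every δ ∈ (0,δ₀], every x ∈ X with ‖x − x*‖ ≤ δ and every y ∈ Y with ‖y − y*‖ ≤ δ one has f(x*,y) ≤ f(x*,y*) and f(x*,y*) ≤ f̄_{h(δ),y*}(x). -/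
/-!
If `x*` minimizes `f̄_{ε_k,y*}` on the `r_k`-ball for a sequence `ε_k → 0⁺`, take
`h(δ) = ε_{K(δ)}` with `K(δ)` the largest `j ≤ ⌈1/δ⌉` such that `δ ≤ r_j`; then
`K(δ) → ∞` as `δ → 0⁺`. Conversely, the radii `h(δ) + δ` tend to `0⁺`, and for small `δ`
and `x` in the `δ`-ball, `f̄_{h(δ)+δ}(x*) ≤ f(x*,y*) ≤ f̄_{h(δ)}(x) ≤ f̄_{h(δ)+δ}(x)`.
-/

open Filter Topology

/-- Local upper envelope `f̄_{ε,y*}` relative to `Y`, in the extended reals. -/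
noncomputable def envU {n m : ℕ}
    (f : EuclideanSpace ℝ (Fin n) → EuclideanSpace ℝ (Fin m) → ℝ)
    (Y : Set (EuclideanSpace ℝ (Fin m))) (ystar : EuclideanSpace ℝ (Fin m)) (ε : ℝ)
    (x : EuclideanSpace ℝ (Fin n)) : EReal :=
  ⨆ y ∈ {y ∈ Y | ‖y - ystar‖ ≤ ε}, ((f x y : ℝ) : EReal)

/-- `(x*, y*)` is a local minimax point of `f` on `X × Y`. -/
def IsLocalMinimax {n m : ℕ} (X : Set (EuclideanSpace ℝ (Fin n)))
    (Y : Set (EuclideanSpace ℝ (Fin m)))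
    (f : EuclideanSpace ℝ (Fin n) → EuclideanSpace ℝ (Fin m) → ℝ)
    (xstar : EuclideanSpace ℝ (Fin n)) (ystar : EuclideanSpace ℝ (Fin m)) : Prop :=
  (∃ ε > (0 : ℝ), ∀ y ∈ Y, ‖y - ystar‖ ≤ ε → f xstar y ≤ f xstar ystar) ∧
  (∃ εseq : ℕ → ℝ, (∀ k, 0 < εseq k) ∧ Tendsto εseq atTop (nhds 0) ∧
    ∀ k, ∃ δ > (0 : ℝ), ∀ x ∈ X, ‖x - xstar‖ ≤ δ →
      envU f Y ystar (εseq k) xstar ≤ envU f Y ystar (εseq k) x)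

theorem exists_index_tendsto_atTop_le {d : ℕ → ℝ} (hd : ∀ k, 0 < d k) :
    ∃ K : ℝ → ℕ, Tendsto K (𝓝[>] 0) atTop ∧ ∀ δ ≤ d 0, δ ≤ d (K δ) := by
  refine ⟨fun δ => Nat.findGreatest (fun j => δ ≤ d j) ⌈δ⁻¹⌉₊, ?_,
    fun δ hδ => Nat.findGreatest_spec (P := fun j => δ ≤ d j) (Nat.zero_le _) hδ⟩
  refine tendsto_atTop.2 fun b => ?_
  have hcap : ∀ᶠ δ in 𝓝[>] (0 : ℝ), b ≤ ⌈δ⁻¹⌉₊ :=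
    (tendsto_nat_ceil_atTop.comp tendsto_inv_nhdsGT_zero).eventually_ge_atTop b
  filter_upwards [hcap, Ioc_mem_nhdsGT (hd b)] with δ hδb hδ
  exact Nat.le_findGreatest hδb hδ.2

section LocalMinimax

variable {n m : ℕ} (f : EuclideanSpace ℝ (Fin n) → EuclideanSpace ℝ (Fin m) → ℝ)
  (Y : Set (EuclideanSpace ℝ (Fin m))) (ystar : EuclideanSpace ℝ (Fin m))

theorem le_envU {ε : ℝ} (x : EuclideanSpace ℝ (Fin n)) {y : EuclideanSpace ℝ (Fin m)}
    (hy : y ∈ Y) (hyε : ‖y - ystar‖ ≤ ε) :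
    ((f x y : ℝ) : EReal) ≤ envU f Y ystar ε x :=
  le_iSup₂_of_le y ⟨hy, hyε⟩ le_rfl

theorem le_envU_self {ε : ℝ} (hε : 0 ≤ ε) (x : EuclideanSpace ℝ (Fin n)) (hyY : ystar ∈ Y) :
    ((f x ystar : ℝ) : EReal) ≤ envU f Y ystar ε x :=
  le_envU f Y ystar x hyY (by simpa using hε)

theorem envU_le {ε : ℝ} (x : EuclideanSpace ℝ (Fin n)) {c : ℝ}
    (h : ∀ y ∈ Y, ‖y - ystar‖ ≤ ε → f x y ≤ c) :
    envU f Y ystar ε x ≤ c :=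
  iSup₂_le fun y hy => EReal.coe_le_coe_iff.2 (h y hy.1 hy.2)

theorem envU_mono {ε ε' : ℝ} (hεε' : ε ≤ ε') (x : EuclideanSpace ℝ (Fin n)) :
    envU f Y ystar ε x ≤ envU f Y ystar ε' x :=
  iSup₂_le fun _ hy => le_envU f Y ystar x hy.1 (hy.2.trans hεε')

variable {X : Set (EuclideanSpace ℝ (Fin n))} {xstar : EuclideanSpace ℝ (Fin n)}

theorem isLocalMinimax_of_frequently
    (hmax : ∃ ε > (0 : ℝ), ∀ y ∈ Y, ‖y - ystar‖ ≤ ε → f xstar y ≤ f xstar ystar)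
    (hmin : ∃ᶠ ε in 𝓝 (0 : ℝ), 0 < ε ∧ ∃ δ > (0 : ℝ), ∀ x ∈ X, ‖x - xstar‖ ≤ δ →
      envU f Y ystar ε xstar ≤ envU f Y ystar ε x) :
    IsLocalMinimax X Y f xstar ystar := by
  obtain ⟨εseq, hεlim, hε⟩ := exists_seq_forall_of_frequently hmin
  exact ⟨hmax, εseq, fun k => (hε k).1, hεlim, fun k => (hε k).2⟩

theorem frequently_envU_le_of_le_envU {δ₀ : ℝ} {h : ℝ → ℝ} (hδ₀ : 0 < δ₀)
    (hmax : ∀ y ∈ Y, ‖y - ystar‖ ≤ δ₀ → f xstar y ≤ f xstar ystar)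
    (hh0 : ∀ δ ∈ Set.Ioc (0 : ℝ) δ₀, 0 ≤ h δ) (hhlim : Tendsto h (𝓝[>] 0) (𝓝 0))
    (hmin : ∀ δ ∈ Set.Ioc (0 : ℝ) δ₀, ∀ x ∈ X, ‖x - xstar‖ ≤ δ →
      ((f xstar ystar : ℝ) : EReal) ≤ envU f Y ystar (h δ) x) :
    ∃ᶠ ε in 𝓝 (0 : ℝ), 0 < ε ∧ ∃ δ > (0 : ℝ), ∀ x ∈ X, ‖x - xstar‖ ≤ δ →
      envU f Y ystar ε xstar ≤ envU f Y ystar ε x := by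
  have hlim : Tendsto (fun δ => h δ + δ) (𝓝[>] 0) (𝓝 0) := by
    simpa using hhlim.add (nhdsWithin_le_nhds (a := (0 : ℝ)) (s := Set.Ioi 0))
  refine hlim.frequently (Eventually.frequently ?_)
  filter_upwards [Ioc_mem_nhdsGT hδ₀, hlim.eventually (eventually_le_nhds hδ₀)] with δ hδ hhδ
  refine ⟨by linarith [hh0 δ hδ, hδ.1], δ, hδ.1, fun x hx hxδ => ?_⟩
  calc envU f Y ystar (h δ + δ) xstar ≤ f xstar ystar :=
        envU_le f Y ystar xstar fun y hy hyε => hmax y hy (hyε.trans hhδ)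
    _ ≤ envU f Y ystar (h δ) x := hmin δ hδ x hx hxδ
    _ ≤ envU f Y ystar (h δ + δ) x := envU_mono f Y ystar (by linarith [hδ.1]) x

end LocalMinimax

theorem isLocalMinimax_iff_jin_general {n m : ℕ}
    (X : Set (EuclideanSpace ℝ (Fin n))) (Y : Set (EuclideanSpace ℝ (Fin m)))
    (f : EuclideanSpace ℝ (Fin n) → EuclideanSpace ℝ (Fin m) → ℝ)
    (xstar : EuclideanSpace ℝ (Fin n)) (ystar : EuclideanSpace ℝ (Fin m))
    (hxX : xstar ∈ X) (hyY : ystar ∈ Y) :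
    IsLocalMinimax X Y f xstar ystar ↔
      ∃ δ₀ > (0 : ℝ), ∃ h : ℝ → ℝ,
        (∀ δ ∈ Set.Ioc (0 : ℝ) δ₀, 0 ≤ h δ) ∧
        Tendsto h (nhdsWithin 0 (Set.Ioi 0)) (nhds 0) ∧
        ∀ δ ∈ Set.Ioc (0 : ℝ) δ₀,
          ∀ x ∈ X, ‖x - xstar‖ ≤ δ → ∀ y ∈ Y, ‖y - ystar‖ ≤ δ →
            f xstar y ≤ f xstar ystar ∧
            ((f xstar ystar : ℝ) : EReal) ≤ envU f Y ystar (h δ) x := by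
  constructor
  · rintro ⟨⟨ε, hε, hmax⟩, εseq, hεpos, hεlim, hmin⟩
    choose r hr hmin using hmin
    obtain ⟨K, hK, hrK⟩ := exists_index_tendsto_atTop_le hr
    refine ⟨min ε (r 0), lt_min hε (hr 0), fun δ => εseq (K δ), fun _ _ => (hεpos _).le,
      hεlim.comp hK, fun δ hδ x hx hxδ y hy hyδ => ⟨hmax y hy ?_, ?_⟩⟩
    · exact hyδ.trans (hδ.2.trans (min_le_left _ _))
    · exact (le_envU_self f Y ystar (hεpos _).le xstar hyY).trans
        (hmin _ x hx (hxδ.trans (hrK δ (hδ.2.trans (min_le_right _ _)))))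
  · rintro ⟨δ₀, hδ₀, h, hh0, hhlim, hmain⟩
    have hmax : ∀ y ∈ Y, ‖y - ystar‖ ≤ δ₀ → f xstar y ≤ f xstar ystar := fun y hy hyδ =>
      (hmain δ₀ ⟨hδ₀, le_rfl⟩ xstar hxX (by simpa using hδ₀.le) y hy hyδ).1
    refine isLocalMinimax_of_frequently f Y ystar ⟨δ₀, hδ₀, hmax⟩ ?_
    exact frequently_envU_le_of_le_envU f Y ystar hδ₀ hmax hh0 hhlim fun δ hδ x hx hxδ =>
      (hmain δ hδ x hx hxδ ystar hyY (by simpa using hδ.1.le)).2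

/-- `(x*, y*)` is local minimax iff there are `δ₀ > 0` and a nonnegative function `h`
on `(0, δ₀]` with `h(δ) → 0` as `δ → 0⁺`, such that for every `δ ∈ (0, δ₀]` and all
`(x, y)` in the `δ`-neighborhood of `(x*, y*)` in `X × Y`,
`f(x*, y) ≤ f(x*, y*) ≤ f̄_{h(δ), y*}(x)`. -/
theorem isLocalMinimax_iff_jin {n m : ℕ}
    (X : Set (EuclideanSpace ℝ (Fin n))) (Y : Set (EuclideanSpace ℝ (Fin m)))
    (hX : X.Nonempty) (hY : Y.Nonempty)
    (f : EuclideanSpace ℝ (Fin n) → EuclideanSpace ℝ (Fin m) → ℝ)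
    (xstar : EuclideanSpace ℝ (Fin n)) (ystar : EuclideanSpace ℝ (Fin m))
    (hxX : xstar ∈ X) (hyY : ystar ∈ Y) :
    IsLocalMinimax X Y f xstar ystar ↔
      ∃ δ₀ > (0 : ℝ), ∃ h : ℝ → ℝ,
        (∀ δ ∈ Set.Ioc (0 : ℝ) δ₀, 0 ≤ h δ) ∧
        Tendsto h (nhdsWithin 0 (Set.Ioi 0)) (nhds 0) ∧
        ∀ δ ∈ Set.Ioc (0 : ℝ) δ₀,
          ∀ x ∈ X, ‖x - xstar‖ ≤ δ → ∀ y ∈ Y, ‖y - ystar‖ ≤ δ →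
            f xstar y ≤ f xstar ystar ∧
            ((f xstar ystar : ℝ) : EReal) ≤ envU f Y ystar (h δ) x :=
  isLocalMinimax_iff_jin_general X Y f xstar ystar hxX hyY
end

section
/- Let X ⊆ ℝ^n and Y ⊆ ℝ^m be nonempty closed convex sets and let f : ℝ^n × ℝ^m → ℝ be continuously differentiable. If (x*,y*) ∈ X × Y is a local minimax point of f, then for all x ∈ X and all y ∈ Y: ⟨∂_x f(x*,y*), x − x*⟩ ≥ 0 and ⟨∂_y f(x*,y*), y − y*⟩ ≤ 0. In particular, if x* is an interior point of X and y* is an interior point of Y, then ∂_x f(x*,y*) = 0 and ∂_y f(x*,y*) = 0. -/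
/-!
The condition in `y` is Fermat's rule for the local maximizer `y*` of `f(x*, ·)` on the convex
set `Y`. For the condition in `x`, strict differentiability of `f` at `(x*, y*)` makes the
first-order expansion in `x` uniform in `y`: near `(x*, y*)`,
`f(x, y) ≤ f(x*, y) + ∂ₓf(x*, y*)(x - x*) + η‖x - x*‖`. Since `y*` maximizes `f(x*, ·)` on small
balls, for small `ε` and `x ∈ X` near `x*` this gives
`f(x*, y*) ≤ f̄_ε(x*) ≤ f̄_ε(x) ≤ f(x*, y*) + ∂ₓf(x*, y*)(x - x*) + η‖x - x*‖`; taking `x` on the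
segment towards a point of `X` and letting `η → 0` gives the claim.
-/

open Filter Topology
open scoped RealInnerProductSpace

theorem HasStrictFDerivAt.eventually_le_partial_fst {E G : Type*} [NormedAddCommGroup E]
    [NormedSpace ℝ E] [NormedAddCommGroup G] [NormedSpace ℝ G] {F : E × G → ℝ}
    {D : E × G →L[ℝ] ℝ} {x₀ : E} {y₀ : G} (hF : HasStrictFDerivAt F D (x₀, y₀))
    {η : ℝ} (hη : 0 < η) :
    ∀ᶠ q in 𝓝 (x₀, y₀), F q ≤ F (x₀, q.2) + D (q.1 - x₀, 0) + η * ‖q.1 - x₀‖ := by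
  have hpair : Tendsto (fun q : E × G => (q, (x₀, q.2))) (𝓝 (x₀, y₀)) (𝓝 ((x₀, y₀), (x₀, y₀))) :=
    (by fun_prop : Continuous fun q : E × G => (q, (x₀, q.2))).tendsto' _ _ rfl
  filter_upwards [hpair.eventually (hF.isLittleO.def hη)] with q hq
  have hdiff : q - (x₀, q.2) = (q.1 - x₀, 0) := Prod.ext rfl (sub_self q.2)
  rw [hdiff, Prod.norm_mk, norm_zero, max_eq_left (norm_nonneg _)] at hq
  linarith [(abs_le.mp (Real.norm_eq_abs _ ▸ hq)).2]

section Gradient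

variable {E G : Type*} [NormedAddCommGroup E] [InnerProductSpace ℝ E]
  [NormedAddCommGroup G] [InnerProductSpace ℝ G]

theorem inner_gradient_prodMk_left [CompleteSpace E] {F : E × G → ℝ} {x₀ : E} {y₀ : G}
    (hF : DifferentiableAt ℝ F (x₀, y₀)) (v : E) :
    ⟪gradient (fun x => F (x, y₀)) x₀, v⟫ = fderiv ℝ F (x₀, y₀) (v, 0) := by
  have hpartial : HasFDerivAt (fun x => F (x, y₀)) _ x₀ :=
    hF.hasFDerivAt.comp x₀ (hasFDerivAt_prodMk_left x₀ y₀)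
  rw [inner_gradient_left, hpartial.fderiv]
  rfl

theorem inner_gradient_prodMk_right [CompleteSpace G] {F : E × G → ℝ} {x₀ : E} {y₀ : G}
    (hF : DifferentiableAt ℝ F (x₀, y₀)) (w : G) :
    ⟪gradient (fun y => F (x₀, y)) y₀, w⟫ = fderiv ℝ F (x₀, y₀) (0, w) := by
  have hpartial : HasFDerivAt (fun y => F (x₀, y)) _ y₀ :=
    hF.hasFDerivAt.comp y₀ (hasFDerivAt_prodMk_right x₀ y₀)
  rw [inner_gradient_left, hpartial.fderiv]
  rfl

end Gradient

theorem tendsto_add_smul_nhdsGT_zero {E : Type*} [NormedAddCommGroup E] [NormedSpace ℝ E]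
    (x v : E) : Tendsto (fun t : ℝ => x + t • v) (𝓝[>] 0) (𝓝 x) :=
  ((by fun_prop : Continuous fun t : ℝ => x + t • v).tendsto' 0 x (by simp)).mono_left
    nhdsWithin_le_nhds

theorem eq_zero_of_mem_interior_of_forall_inner_sub_nonneg {E : Type*} [NormedAddCommGroup E]
    [InnerProductSpace ℝ E] {X : Set E} {x₀ g : E} (hx₀ : x₀ ∈ interior X)
    (h : ∀ x ∈ X, 0 ≤ ⟪g, x - x₀⟫) : g = 0 := by
  obtain ⟨t, hX, ht⟩ := (((tendsto_add_smul_nhdsGT_zero x₀ (-g)).eventually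
    (mem_interior_iff_mem_nhds.mp hx₀)).and self_mem_nhdsWithin).exists
  have hg := h _ hX
  rw [add_sub_cancel_left, real_inner_smul_right, inner_neg_right, real_inner_self_eq_norm_sq]
    at hg
  have : ‖g‖ ^ 2 ≤ 0 := nonpos_of_mul_nonpos_right (by linarith) (Set.mem_Ioi.mp ht)
  simpa using this

section Minimax

variable {n m : ℕ} {X : Set (EuclideanSpace ℝ (Fin n))} {Y : Set (EuclideanSpace ℝ (Fin m))}
  {f : EuclideanSpace ℝ (Fin n) → EuclideanSpace ℝ (Fin m) → ℝ}
  {xstar : EuclideanSpace ℝ (Fin n)} {ystar : EuclideanSpace ℝ (Fin m)}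

theorem coe_le_envU {ε : ℝ} (hyY : ystar ∈ Y) (hε : 0 ≤ ε) (x : EuclideanSpace ℝ (Fin n)) :
    (f x ystar : EReal) ≤ envU f Y ystar ε x :=
  le_iSup₂_of_le (f := fun y (_ : y ∈ {y ∈ Y | ‖y - ystar‖ ≤ ε}) => ((f x y : ℝ) : EReal))
    ystar ⟨hyY, by simpa using hε⟩ le_rfl

theorem envU_le_coe {ε c : ℝ} {x : EuclideanSpace ℝ (Fin n)}
    (h : ∀ y ∈ Y, ‖y - ystar‖ ≤ ε → f x y ≤ c) : envU f Y ystar ε x ≤ c :=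
  iSup₂_le fun y hy => EReal.coe_le_coe_iff.mpr (h y hy.1 hy.2)

theorem envU_eventually_le {D : EuclideanSpace ℝ (Fin n) × EuclideanSpace ℝ (Fin m) →L[ℝ] ℝ}
    (hF : HasStrictFDerivAt (fun p => f p.1 p.2) D (xstar, ystar)) {ε : ℝ} (hε : 0 < ε)
    (hmax : ∀ y ∈ Y, ‖y - ystar‖ ≤ ε → f xstar y ≤ f xstar ystar) {η : ℝ} (hη : 0 < η) :
    ∀ᶠ ε' in 𝓝 0, ∀ᶠ x in 𝓝 xstar, envU f Y ystar ε' x ≤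
      ((f xstar ystar + D (x - xstar, 0) + η * ‖x - xstar‖ : ℝ) : EReal) := by
  have hpartial := hF.eventually_le_partial_fst hη
  rw [nhds_prod_eq] at hpartial
  obtain ⟨U, hU, V, hV, hUV⟩ := eventually_prod_iff.mp hpartial
  obtain ⟨r, hr, hrV⟩ := Metric.nhds_basis_closedBall.mem_iff.mp hV
  filter_upwards [eventually_le_nhds (lt_min hε hr)] with ε' hε'
  filter_upwards [hU] with x hx
  refine envU_le_coe fun y hy hyε' => ?_
  have hyε : ‖y - ystar‖ ≤ min ε r := hyε'.trans hε'
  have hyV : V y := hrV (mem_closedBall_iff_norm.mpr (hyε.trans (min_le_right _ _)))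
  linarith [hUV hx hyV, hmax y hy (hyε.trans (min_le_left _ _))]

theorem IsLocalMinimax.hasStrictFDerivAt_inl_nonneg (hmm : IsLocalMinimax X Y f xstar ystar)
    {D : EuclideanSpace ℝ (Fin n) × EuclideanSpace ℝ (Fin m) →L[ℝ] ℝ}
    (hF : HasStrictFDerivAt (fun p => f p.1 p.2) D (xstar, ystar)) (hX : Convex ℝ X)
    (hxX : xstar ∈ X) (hyY : ystar ∈ Y) {x : EuclideanSpace ℝ (Fin n)} (hx : x ∈ X) :
    0 ≤ D (x - xstar, 0) := by
  obtain ⟨⟨ε, hε, hmax⟩, εseq, hεpos, hεlim, hmin⟩ := hmm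
  set v := x - xstar
  refine ge_of_tendsto (tendsto_add_smul_nhdsGT_zero (D (v, 0)) ‖v‖)
    (eventually_nhdsWithin_of_forall fun η hη => ?_)
  obtain ⟨k, hk⟩ := (hεlim.eventually (envU_eventually_le hF hε hmax hη)).exists
  obtain ⟨δ, hδ, hkmin⟩ := hmin k
  have hray := tendsto_add_smul_nhdsGT_zero xstar v
  obtain ⟨t, ⟨ht0, ht1⟩, hbound, hclose⟩ := (Filter.Eventually.and (Ioc_mem_nhdsGT one_pos)
    ((hray.eventually hk).and (hray.eventually (Metric.closedBall_mem_nhds xstar hδ)))).exists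
  have hxt : xstar + t • v ∈ X := hX.add_smul_sub_mem hxX hx ⟨ht0.le, ht1⟩
  have hchain := ((coe_le_envU hyY (hεpos k).le xstar).trans
    (hkmin _ hxt (mem_closedBall_iff_norm.mp hclose))).trans hbound
  rw [EReal.coe_le_coe_iff, add_sub_cancel_left, norm_smul, Real.norm_of_nonneg ht0.le,
    ← smul_zero t, ← Prod.smul_mk, map_smul, smul_eq_mul] at hchain
  exact nonneg_of_mul_nonneg_right (by rw [smul_eq_mul]; linarith) ht0

theorem IsLocalMinimax.isLocalMaxOn (hmm : IsLocalMinimax X Y f xstar ystar) :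
    IsLocalMaxOn (f xstar) Y ystar := by
  obtain ⟨ε, hε, hmax⟩ := hmm.1
  filter_upwards [self_mem_nhdsWithin,
    mem_nhdsWithin_of_mem_nhds (Metric.closedBall_mem_nhds ystar hε)] with y hy hyε
  exact hmax y hy (mem_closedBall_iff_norm.mp hyε)

theorem IsLocalMinimax.hasFDerivAt_inr_nonpos (hmm : IsLocalMinimax X Y f xstar ystar)
    {D : EuclideanSpace ℝ (Fin n) × EuclideanSpace ℝ (Fin m) →L[ℝ] ℝ}
    (hF : HasFDerivAt (fun p => f p.1 p.2) D (xstar, ystar)) (hY : Convex ℝ Y)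
    (hyY : ystar ∈ Y) {y : EuclideanSpace ℝ (Fin m)} (hy : y ∈ Y) :
    D (0, y - ystar) ≤ 0 :=
  hmm.isLocalMaxOn.hasFDerivWithinAt_nonpos
    (hF.comp ystar (hasFDerivAt_prodMk_right xstar ystar)).hasFDerivWithinAt
    (sub_mem_posTangentConeAt_of_segment_subset (hY.segment_subset hyY hy))

end Minimax

theorem localMinimax_firstOrder_necessary_general {n m : ℕ}
    (X : Set (EuclideanSpace ℝ (Fin n))) (Y : Set (EuclideanSpace ℝ (Fin m)))
    (hXconv : Convex ℝ X) (hYconv : Convex ℝ Y)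
    (f : EuclideanSpace ℝ (Fin n) → EuclideanSpace ℝ (Fin m) → ℝ)
    (hf : ContDiff ℝ 1 (fun p : EuclideanSpace ℝ (Fin n) × EuclideanSpace ℝ (Fin m) => f p.1 p.2))
    (xstar : EuclideanSpace ℝ (Fin n)) (ystar : EuclideanSpace ℝ (Fin m))
    (hxX : xstar ∈ X) (hyY : ystar ∈ Y)
    (hmm : IsLocalMinimax X Y f xstar ystar) :
    (∀ x ∈ X, 0 ≤ ⟪gradient (fun x' => f x' ystar) xstar, x - xstar⟫) ∧
    (∀ y ∈ Y, ⟪gradient (fun y' => f xstar y') ystar, y - ystar⟫ ≤ 0) ∧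
    (xstar ∈ interior X → ystar ∈ interior Y →
      gradient (fun x' => f x' ystar) xstar = 0 ∧
      gradient (fun y' => f xstar y') ystar = 0) := by
  have hF := hf.contDiffAt.hasStrictFDerivAt (x := (xstar, ystar)) one_ne_zero
  have hX : ∀ x ∈ X, 0 ≤ ⟪gradient (fun x' => f x' ystar) xstar, x - xstar⟫ := fun x hx => by
    rw [inner_gradient_prodMk_left hF.differentiableAt]
    exact hmm.hasStrictFDerivAt_inl_nonneg hF hXconv hxX hyY hx
  have hY : ∀ y ∈ Y, ⟪gradient (fun y' => f xstar y') ystar, y - ystar⟫ ≤ 0 := fun y hy => by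
    rw [inner_gradient_prodMk_right hF.differentiableAt]
    exact hmm.hasFDerivAt_inr_nonpos hF.hasFDerivAt hYconv hyY hy
  refine ⟨hX, hY, fun hxi hyi => ⟨eq_zero_of_mem_interior_of_forall_inner_sub_nonneg hxi hX, ?_⟩⟩
  refine neg_eq_zero.mp (eq_zero_of_mem_interior_of_forall_inner_sub_nonneg hyi fun y hy => ?_)
  rw [inner_neg_left]
  linarith [hY y hy]

/-- First-order necessary conditions at a local minimax point on closed convex sets,
together with the interior (unconstrained) specialization. -/
theorem localMinimax_firstOrder_necessary {n m : ℕ}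
    (X : Set (EuclideanSpace ℝ (Fin n))) (Y : Set (EuclideanSpace ℝ (Fin m)))
    (hXne : X.Nonempty) (hYne : Y.Nonempty)
    (hXc : IsClosed X) (hYc : IsClosed Y) (hXconv : Convex ℝ X) (hYconv : Convex ℝ Y)
    (f : EuclideanSpace ℝ (Fin n) → EuclideanSpace ℝ (Fin m) → ℝ)
    (hf : ContDiff ℝ 1 (fun p : EuclideanSpace ℝ (Fin n) × EuclideanSpace ℝ (Fin m) => f p.1 p.2))
    (xstar : EuclideanSpace ℝ (Fin n)) (ystar : EuclideanSpace ℝ (Fin m))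
    (hxX : xstar ∈ X) (hyY : ystar ∈ Y)
    (hmm : IsLocalMinimax X Y f xstar ystar) :
    (∀ x ∈ X, 0 ≤ ⟪gradient (fun x' => f x' ystar) xstar, x - xstar⟫) ∧
    (∀ y ∈ Y, ⟪gradient (fun y' => f xstar y') ystar, y - ystar⟫ ≤ 0) ∧
    (xstar ∈ interior X → ystar ∈ interior Y →
      gradient (fun x' => f x' ystar) xstar = 0 ∧
      gradient (fun y' => f xstar y') ystar = 0) :=
  localMinimax_firstOrder_necessary_general X Y hXconv hYconv f hf xstar ystar hxX hyY hmm
end
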